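/- Let L be a positive integer, let x ∈ ℍ^L be fixed, and let f : ℍ^L → ℍ be the function f(w) = (Σ_{l} w_l·x_l)·(Σ_{l} x_l*·w_l*). Then for every index m and every point w ∈ ℍ^L, the m-th HR*-partial derivative of f at w equals (1/2)·(Σ_{l} w_l·x_l)·x_m*; that is, ∂(wᵀx·xᴴw*)/∂w_m* = (1/2)·(wᵀx)·x_m*. -/

import Mathlib

open Quaternion

/-- The imaginary unit `i` of the real quaternions. -/
def qI : ℍ[ℝ] := ⟨0, 1, 0, 0⟩

/-- The imaginary unit `j` of the real quaternions. -/
def qJ : ℍ[ℝ] := ⟨0, 0, 1, 0⟩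

/-- The imaginary unit `k` of the real quaternions. -/
def qK : ℍ[ℝ] := ⟨0, 0, 0, 1⟩

/-- The `m`-th HR*-partial derivative of `f : ℍ^L → ℍ` at `w`:
`(1/4) (D_{1,m} f(w) + (D_{i,m} f(w))·i + (D_{j,m} f(w))·j + (D_{k,m} f(w))·k)`,
where `D_{v,m} f(w)` is the real Fréchet derivative of `f` at `w` in direction `v·e_m`. -/
noncomputable def HRStarPartial {L : ℕ} (f : (Fin L → ℍ[ℝ]) → ℍ[ℝ]) (m : Fin L)
    (w : Fin L → ℍ[ℝ]) : ℍ[ℝ] :=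
  (4 : ℍ[ℝ])⁻¹ * (fderiv ℝ f w (Pi.single m 1) + fderiv ℝ f w (Pi.single m qI) * qI
    + fderiv ℝ f w (Pi.single m qJ) * qJ + fderiv ℝ f w (Pi.single m qK) * qK)

/-!
Write `g w = ∑ l, w l * x l`; it is `ℝ`-linear and `f = g * star g`, so with `a = g w` the
directional derivative is `D_{v,m} f(w) = a * star (v * x m) + v * x m * star a`.
Multiplying by `v` on the right and summing over `v ∈ {1, i, j, k}`, the first terms give
`4 * a * star (x m)` because `star v * v = 1`, and the second give `-2 * a * star (x m)` by the
identity `∑ v, v * c * v = -2 * star c`.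
-/

instance : StarModule ℝ ℍ[ℝ] := ⟨fun r q => by ext <;> simp⟩

section SumMulRight

variable {ι 𝕜 A : Type*} [Fintype ι] [NontriviallyNormedField 𝕜] [NormedRing A]
  [NormedAlgebra 𝕜 A]

variable (𝕜) in
noncomputable def sumMulRight (x : ι → A) : (ι → A) →L[𝕜] A :=
  ∑ l, (ContinuousLinearMap.mul 𝕜 A).flip (x l) ∘L ContinuousLinearMap.proj l

theorem sumMulRight_apply (x v : ι → A) : sumMulRight 𝕜 x v = ∑ l, v l * x l := by
  simp [sumMulRight]

theorem sumMulRight_single [DecidableEq ι] (x : ι → A) (m : ι) (q : A) :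
    sumMulRight 𝕜 x (Pi.single m q) = q * x m := by
  rw [sumMulRight_apply, Fintype.sum_eq_single m fun l hl => by simp [hl]]
  simp

end SumMulRight

theorem fderiv_mul_star_apply {E A : Type*} [NormedAddCommGroup E] [NormedSpace ℝ E]
    [NormedRing A] [NormedAlgebra ℝ A] [StarRing A] [StarModule ℝ A] [ContinuousStar A]
    (G : E →L[ℝ] A) (w h : E) :
    fderiv ℝ (fun v => G v * star (G v)) w h = G w * star (G h) + G h * star (G w) := by
  have hG : HasFDerivAt (fun v => G v * star (G v)) _ w :=
    G.hasFDerivAt.mul' G.hasFDerivAt.star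
  rw [hG.fderiv]
  simp

namespace Quaternion

theorem star_qI_mul_qI : star qI * qI = 1 := by
  ext <;> simp [re_mul, imI_mul, imJ_mul, imK_mul] <;> simp [qI]

theorem star_qJ_mul_qJ : star qJ * qJ = 1 := by
  ext <;> simp [re_mul, imI_mul, imJ_mul, imK_mul] <;> simp [qJ]

theorem star_qK_mul_qK : star qK * qK = 1 := by
  ext <;> simp [re_mul, imI_mul, imJ_mul, imK_mul] <;> simp [qK]

theorem basis_sandwich_sum (c : ℍ[ℝ]) :
    c + qI * c * qI + qJ * c * qJ + qK * c * qK = -(star c + star c) := by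
  ext <;> simp [re_mul, imI_mul, imJ_mul, imK_mul] <;> simp [qI, qJ, qK]

theorem ofNat_two_ne_zero : (2 : ℍ[ℝ]) ≠ 0 := fun h =>
  two_ne_zero (congrArg QuaternionAlgebra.re h : (2 : ℝ) = 0)

theorem inv_four_mul_two_mul (y : ℍ[ℝ]) : (4 : ℍ[ℝ])⁻¹ * (2 * y) = 2⁻¹ * y := by
  rw [show (4 : ℍ[ℝ]) = 2 * 2 by norm_num, mul_inv_rev, mul_assoc,
    inv_mul_cancel_left₀ ofNat_two_ne_zero]

end Quaternion

theorem hrStar_combination_of_quadratic (a b : ℍ[ℝ]) (D : ℍ[ℝ] → ℍ[ℝ])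
    (hD : ∀ q, D q = a * star (q * b) + q * b * star a) :
    (4 : ℍ[ℝ])⁻¹ * (D 1 + D qI * qI + D qJ * qJ + D qK * qK) = 2⁻¹ * (a * star b) := by
  have hconj (v : ℍ[ℝ]) : a * star (v * b) * v = a * star b * (star v * v) := by
    rw [star_mul, mul_assoc, mul_assoc, mul_assoc]
  have hsum : D 1 + D qI * qI + D qJ * qJ + D qK * qK = 2 * (a * star b) := by
    simp only [hD, add_mul, hconj, star_qI_mul_qI, star_qJ_mul_qJ, star_qK_mul_qK, one_mul,
      mul_one]
    calc _ = 4 * (a * star b) + (b * star a + qI * (b * star a) * qI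
              + qJ * (b * star a) * qJ + qK * (b * star a) * qK) := by
            noncomm_ring
      _ = 2 * (a * star b) := by
            rw [basis_sandwich_sum, star_mul, star_star]
            noncomm_ring
  rw [hsum, inv_four_mul_two_mul]

theorem hr_star_partial_quadratic_general (L : ℕ) (x : Fin L → ℍ[ℝ])
    (m : Fin L) (w : Fin L → ℍ[ℝ]) :
    HRStarPartial (fun v => (∑ l, v l * x l) * (∑ l, star (x l) * star (v l))) m w
      = (2 : ℍ[ℝ])⁻¹ * ((∑ l, w l * x l) * star (x m)) := by
  have hf : (fun v : Fin L → ℍ[ℝ] => (∑ l, v l * x l) * ∑ l, star (x l) * star (v l))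
      = fun v => sumMulRight ℝ x v * star (sumMulRight ℝ x v) := by
    funext v
    simp [sumMulRight_apply, star_sum]
  rw [HRStarPartial, hf, ← sumMulRight_apply (𝕜 := ℝ)]
  exact hrStar_combination_of_quadratic _ _ (fun q => fderiv ℝ _ w (Pi.single m q))
    fun q => by rw [fderiv_mul_star_apply, sumMulRight_single]

/-- ∂(wᵀx·xᴴw*)/∂w_m* = (1/2)·(wᵀx)·x_m*. -/
theorem hr_star_partial_quadratic (L : ℕ) (hL : 0 < L) (x : Fin L → ℍ[ℝ])
    (m : Fin L) (w : Fin L → ℍ[ℝ]) :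
    HRStarPartial (fun v => (∑ l, v l * x l) * (∑ l, star (x l) * star (v l))) m w
      = (2 : ℍ[ℝ])⁻¹ * ((∑ l, w l * x l) * star (x m)) :=
  hr_star_partial_quadratic_general L x m w
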